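/- (Tile-counting estimate for incomparable dense tiles) Let 𝕊 be a tiling, J a dyadic interval, N: ℝ → ℝ measurable, f ∈ L^∞ with compact support, and δ > 0. Let ℙ' ⊂ 𝕊^J be a finite collection of pairwise incomparable tiles (with respect to the order P ≲ P' iff I_P ⊂ I_{P'} and ω_{P'}^{p(1)} ⊂ ω_P^{p(1)}) such that for every P ∈ ℙ' the tailed average ⟪f·1_{N^{-1}(ω_P^{p(1)})}⟫_{1,I_P} exceeds δ. Then Σ_{P∈ℙ'} |I_P| ≤ C·δ^{−1}·|J|·inf_J M f, where M is the Hardy–Littlewood maximal function. -/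

import Mathlib

/-- A dyadic interval `[2^k n, 2^k (n+1))` in the standard dyadic grid on `ℝ`. -/
structure DyadicInterval where
  k : ℤ
  n : ℤ
deriving DecidableEq

namespace DyadicInterval

noncomputable def len (I : DyadicInterval) : ℝ := (2 : ℝ) ^ I.k
noncomputable def left (I : DyadicInterval) : ℝ := (2 : ℝ) ^ I.k * I.n
noncomputable def set (I : DyadicInterval) : Set ℝ := Set.Ico I.left (I.left + I.len)
/-- The `κ`-th dyadic parent. -/
def parent (κ : ℕ) (I : DyadicInterval) : DyadicInterval := ⟨I.k + κ, Int.fdiv I.n (2 ^ κ)⟩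

end DyadicInterval

/-- A tile `P = I_P × ω_P`. -/
structure Tile where
  I : DyadicInterval
  ω : DyadicInterval
deriving DecidableEq

/-- The reciprocal-length constraint `ℓ(I_P)·ℓ(ω_P) = 1`. -/
def Tile.Valid (P : Tile) : Prop := P.I.k + P.ω.k = 0

/-- `T` is a `κ`-tree with top data `(I_T, ξ_T)`. -/
def IsTree (κ : ℕ) (T : Finset Tile) (IT : DyadicInterval) (ξ : ℝ) : Prop :=
  ∀ P ∈ T, P.I.set ⊆ IT.set ∧ ξ ∈ (P.ω.parent κ).set


open MeasureTheory ENNReal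

noncomputable def DyadicInterval.center (I : DyadicInterval) : ℝ := I.left + I.len / 2

noncomputable def jbracket (x : ℝ) : ℝ := Real.sqrt (1 + x ^ 2)

/-- The Hardy–Littlewood maximal function (over intervals centered at `x`). -/
noncomputable def hlMax (f : ℝ → ℂ) (x : ℝ) : ℝ≥0∞ :=
  ⨆ (r : ℝ) (_ : 0 < r),
    (ENNReal.ofReal (2 * r))⁻¹ * ∫⁻ y in Set.Ioo (x - r) (x + r), (‖f y‖₊ : ℝ≥0∞)

/-- The polynomial cutoff `χ_I(x) = ⟨(x - c_I)/ℓ_I⟩⁻¹`. -/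
noncomputable def cutoff (I : DyadicInterval) (x : ℝ) : ℝ :=
  (jbracket ((x - I.center) / I.len))⁻¹

/-- The tailed average `⟪f·1_S⟫_{1,I} = |I|⁻¹ ∫ |f| 1_S χ_I^{2⁹}`. -/
noncomputable def tailedAvg (f : ℝ → ℂ) (S : Set ℝ) (I : DyadicInterval) : ℝ≥0∞ :=
  (ENNReal.ofReal I.len)⁻¹ *
    ∫⁻ x : ℝ, S.indicator (fun y => (‖f y‖₊ : ℝ≥0∞)) x *
      ENNReal.ofReal (cutoff I x ^ (2 ^ 9 : ℕ))

/-- The Fefferman order relation `P ≲ P'` (with `κ = 1`). -/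
def TileLe (P P' : Tile) : Prop :=
  P.I.set ⊆ P'.I.set ∧ (P'.ω.parent 1).set ⊆ (P.ω.parent 1).set


/-
Every tile `P` has a scale `k` at which `f · 1_{N⁻¹(ω_P^{p(1)})}` has mass at least
`2^{6k} δ |I_P| / 2⁸` on `2^k I_P`: otherwise the tail `χ_{I_P}^{2⁹}`, which decays faster than
these thresholds grow, would make the tailed average at most `δ`. For a fixed `k`, a Vitali
selection among the boxes `2^k I_P × ω_P^{p(1)}` yields disjoint boxes, hence disjoint sets
`{y ∈ 2^k I_P : N y ∈ ω_P^{p(1)}}` inside a ball of radius `2^{k+1} |J|` around any `x ∈ J`; so the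
selected tiles have total length `≲ 2^{-5k} δ⁻¹ |J| M f(x)`. A tile attached to a selected `Q`
has a frequency parent containing that of `Q`, so by incomparability the intervals attached to
`Q` are pairwise disjoint and lie within `2^{k+2} |I_Q|` of `c_Q`. This costs `2^{k+3}`, and
the geometric series over `k` converges.
-/

open Metric

namespace DyadicInterval

lemma len_pos (I : DyadicInterval) : 0 < I.len := zpow_pos two_pos _

lemma len_le_len_iff {I I' : DyadicInterval} : I.len ≤ I'.len ↔ I.k ≤ I'.k :=
  zpow_le_zpow_iff_right₀ _root_.one_lt_two

lemma len_le_len_of_lt_two_mul {I I' : DyadicInterval} (h : I.len < 2 * I'.len) :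
    I.len ≤ I'.len := by
  rw [len_le_len_iff]
  have : I.k < I'.k + 1 := by
    rw [← zpow_lt_zpow_iff_right₀ (_root_.one_lt_two : (1 : ℝ) < 2), zpow_add_one₀ two_ne_zero,
      mul_comm]
    exact h
  omega

lemma volume_set (I : DyadicInterval) : volume I.set = ENNReal.ofReal I.len := by
  rw [set, Real.volume_Ico, add_sub_cancel_left]

lemma measurableSet_set (I : DyadicInterval) : MeasurableSet I.set := measurableSet_Ico

lemma len_le_len_of_subset {I J : DyadicInterval} (h : I.set ⊆ J.set) : I.len ≤ J.len := by
  have := measure_mono (μ := volume) h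
  rwa [volume_set, volume_set, ENNReal.ofReal_le_ofReal_iff J.len_pos.le] at this

lemma center_mem (I : DyadicInterval) : I.center ∈ I.set := by
  have := I.len_pos
  constructor <;> simp only [center] <;> linarith

lemma set_subset_closedBall (I : DyadicInterval) : I.set ⊆ closedBall I.center (I.len / 2) := by
  rintro x ⟨h₁, h₂⟩
  rw [mem_closedBall, Real.dist_eq, abs_le]
  simp only [center]
  constructor <;> linarith

lemma dist_lt_len {I : DyadicInterval} {x y : ℝ} (hx : x ∈ I.set) (hy : y ∈ I.set) :
    dist x y < I.len := by
  rw [Real.dist_eq, abs_lt]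
  obtain ⟨hx₁, hx₂⟩ := hx
  obtain ⟨hy₁, hy₂⟩ := hy
  constructor <;> linarith

lemma mem_set_iff {I : DyadicInterval} {x : ℝ} : x ∈ I.set ↔ ⌊x / 2 ^ I.k⌋ = I.n := by
  have h2k : (0 : ℝ) < 2 ^ I.k := zpow_pos two_pos _
  rw [Int.floor_eq_iff, le_div_iff₀ h2k, div_lt_iff₀ h2k]
  simp only [set, left, len, Set.mem_Ico]
  constructor <;> rintro ⟨h₁, h₂⟩ <;> constructor <;> linarith

lemma floor_div_zpow_eq {k k' : ℤ} (h : k ≤ k') (x : ℝ) :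
    ⌊x / 2 ^ k'⌋ = ⌊x / 2 ^ k⌋ / 2 ^ (k' - k).toNat := by
  have hpow : (2 : ℝ) ^ k' = 2 ^ k * ((2 ^ (k' - k).toNat : ℕ) : ℝ) := by
    rw [Nat.cast_pow, Nat.cast_ofNat, ← zpow_natCast, Int.toNat_of_nonneg (by omega),
      ← zpow_add₀ two_ne_zero, add_sub_cancel]
  rw [hpow, ← div_div, Int.floor_div_natCast]
  norm_cast

theorem subset_or_disjoint {I I' : DyadicInterval} (h : I.k ≤ I'.k) :
    I.set ⊆ I'.set ∨ Disjoint I.set I'.set := by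
  refine or_iff_not_imp_right.2 fun hmeet y hy => ?_
  obtain ⟨x, hx, hx'⟩ := Set.not_disjoint_iff.1 hmeet
  rw [mem_set_iff] at hx hx' hy ⊢
  rw [floor_div_zpow_eq h] at hx' ⊢
  rw [hy, ← hx', hx]

end DyadicInterval

namespace Tile

lemma parent_subset_parent_of_len_le {P Q : Tile} (hP : P.Valid) (hQ : Q.Valid)
    (hlen : P.I.len ≤ Q.I.len) (hmeet : ¬Disjoint (P.ω.parent 1).set (Q.ω.parent 1).set) :
    (Q.ω.parent 1).set ⊆ (P.ω.parent 1).set := by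
  have hk : (Q.ω.parent 1).k ≤ (P.ω.parent 1).k := by
    have := DyadicInterval.len_le_len_iff.1 hlen
    simp only [DyadicInterval.parent, Valid] at *
    omega
  exact (DyadicInterval.subset_or_disjoint hk).resolve_right fun h => hmeet h.symm

lemma disjoint_set_of_incomparable {P P' : Tile} (hP : P.Valid) (hP' : P'.Valid)
    (hPP' : ¬TileLe P P') (hP'P : ¬TileLe P' P)
    (hmeet : ¬Disjoint (P.ω.parent 1).set (P'.ω.parent 1).set) : Disjoint P.I.set P'.I.set := by
  wlog hk : P.I.k ≤ P'.I.k generalizing P P'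
  · exact (this hP' hP hP'P hPP' (fun h => hmeet h.symm) (by omega)).symm
  refine (DyadicInterval.subset_or_disjoint hk).resolve_left fun hI => hPP' ⟨hI, ?_⟩
  exact parent_subset_parent_of_len_le hP hP' (DyadicInterval.len_le_len_iff.2 hk) hmeet

/-- The phase-space box `2^k I_P × ω_P^{p(1)}`, with `2^k I_P` taken to be a closed ball. -/
def enlarged (k : ℕ) (P : Tile) : Set (ℝ × ℝ) :=
  closedBall P.I.center (2 ^ k * P.I.len) ×ˢ (P.ω.parent 1).set

lemma measurableSet_enlarged (k : ℕ) (P : Tile) : MeasurableSet (P.enlarged k) :=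
  measurableSet_closedBall.prod (P.ω.parent 1).measurableSet_set

lemma enlarged_nonempty (k : ℕ) (P : Tile) : (P.enlarged k).Nonempty :=
  ⟨(P.I.center, (P.ω.parent 1).center),
    mem_closedBall_self (by have := P.I.len_pos; positivity), (P.ω.parent 1).center_mem⟩

lemma dist_center_le_of_enlarged_meet {k : ℕ} {P Q : Tile}
    (h : (P.enlarged k ∩ Q.enlarged k).Nonempty) :
    dist P.I.center Q.I.center ≤ 2 ^ k * P.I.len + 2 ^ k * Q.I.len := by
  obtain ⟨⟨y, _⟩, ⟨hyP, -⟩, ⟨hyQ, -⟩⟩ := h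
  exact (dist_triangle_left _ _ y).trans (add_le_add hyP hyQ)

lemma sum_len_le_of_meet_enlarged {k : ℕ} {Q : Tile} (hQ : Q.Valid) {F : Finset Tile}
    (hvalid : ∀ P ∈ F, P.Valid)
    (hincomp : ∀ P ∈ F, ∀ P' ∈ F, P ≠ P' → ¬TileLe P P' ∧ ¬TileLe P' P)
    (hmeet : ∀ P ∈ F, (P.enlarged k ∩ Q.enlarged k).Nonempty)
    (hlen : ∀ P ∈ F, P.I.len ≤ Q.I.len) :
    ∑ P ∈ F, ENNReal.ofReal P.I.len ≤ 2 ^ (k + 3) * ENNReal.ofReal Q.I.len := by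
  have hparent : ∀ P ∈ F, (Q.ω.parent 1).set ⊆ (P.ω.parent 1).set := by
    intro P hP
    obtain ⟨⟨_, w⟩, ⟨-, hwP⟩, ⟨-, hwQ⟩⟩ := hmeet P hP
    exact parent_subset_parent_of_len_le (hvalid P hP) hQ (hlen P hP)
      (Set.not_disjoint_iff.2 ⟨w, hwP, hwQ⟩)
  have hdisj : (F : Set Tile).PairwiseDisjoint (fun P => P.I.set) := by
    intro P hP P' hP' hne
    have hω := (Q.ω.parent 1).center_mem
    exact disjoint_set_of_incomparable (hvalid P hP) (hvalid P' hP')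
      (hincomp P hP P' hP' hne).1 (hincomp P hP P' hP' hne).2
      (Set.not_disjoint_iff.2 ⟨_, hparent P hP hω, hparent P' hP' hω⟩)
  have hball : ∀ P ∈ F, P.I.set ⊆ closedBall Q.I.center (2 ^ (k + 2) * Q.I.len) := by
    intro P hP z hz
    have h₁ := mem_closedBall.1 (P.I.set_subset_closedBall hz)
    have h₂ := dist_center_le_of_enlarged_meet (hmeet P hP)
    have h₃ := hlen P hP
    have h₄ : (1 : ℝ) ≤ 2 ^ k := one_le_pow₀ one_le_two
    have h₅ := P.I.len_pos
    rw [mem_closedBall, pow_add]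
    nlinarith [dist_triangle z P.I.center Q.I.center]
  calc ∑ P ∈ F, ENNReal.ofReal P.I.len = volume (⋃ P ∈ F, P.I.set) := by
        rw [measure_biUnion_finset hdisj fun P _ => P.I.measurableSet_set]
        simp only [DyadicInterval.volume_set]
    _ ≤ volume (closedBall Q.I.center (2 ^ (k + 2) * Q.I.len)) :=
        measure_mono (Set.iUnion₂_subset hball)
    _ = 2 ^ (k + 3) * ENNReal.ofReal Q.I.len := by
        rw [Real.volume_closedBall, ← mul_assoc, ← pow_succ', ENNReal.ofReal_mul (by positivity),
          ENNReal.ofReal_pow zero_le_two, ENNReal.ofReal_ofNat]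

end Tile

lemma le_hlMax (f : ℝ → ℂ) (x : ℝ) {r : ℝ} (hr : 0 < r) :
    ∫⁻ y in ball x r, (‖f y‖₊ : ℝ≥0∞) ≤ ENNReal.ofReal (2 * r) * hlMax f x := by
  have h2r : ENNReal.ofReal (2 * r) ≠ 0 := by simp [hr]
  rw [← ENNReal.inv_mul_le_iff h2r ENNReal.ofReal_ne_top, Real.ball_eq_Ioo]
  exact le_iSup₂ (f := fun (r : ℝ) (_ : 0 < r) =>
    (ENNReal.ofReal (2 * r))⁻¹ * ∫⁻ y in Set.Ioo (x - r) (x + r), (‖f y‖₊ : ℝ≥0∞)) r hr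

lemma mul_sum_len_le_of_pairwiseDisjoint_enlarged {k : ℕ} {J : DyadicInterval} {N : ℝ → ℝ}
    (hN : Measurable N) {f : ℝ → ℂ} {a : ℝ≥0∞} {B : Finset Tile} (hsub : ∀ Q ∈ B, Q.I.set ⊆ J.set)
    (hdisj : (B : Set Tile).PairwiseDisjoint (Tile.enlarged k))
    (hdense : ∀ Q ∈ B, a * ENNReal.ofReal Q.I.len ≤
      ∫⁻ y in (fun y => (y, N y)) ⁻¹' Q.enlarged k, (‖f y‖₊ : ℝ≥0∞))
    {x : ℝ} (hx : x ∈ J.set) :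
    a * ∑ Q ∈ B, ENNReal.ofReal Q.I.len ≤ ENNReal.ofReal (2 ^ (k + 2) * J.len) * hlMax f x := by
  have hgraph : Measurable fun y => (y, N y) := measurable_id.prodMk hN
  have hball : ∀ Q ∈ B,
      (fun y => (y, N y)) ⁻¹' Q.enlarged k ⊆ ball x (2 ^ (k + 1) * J.len) := by
    intro Q hQ y hy
    have h₁ : dist y Q.I.center ≤ 2 ^ k * Q.I.len := hy.1
    have h₂ := DyadicInterval.dist_lt_len (hsub Q hQ Q.I.center_mem) hx
    have h₃ := DyadicInterval.len_le_len_of_subset (hsub Q hQ)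
    have h₄ : (1 : ℝ) ≤ 2 ^ k := one_le_pow₀ one_le_two
    rw [mem_ball, pow_succ]
    nlinarith [dist_triangle y Q.I.center x,
      mul_le_mul_of_nonneg_left h₃ (by positivity : (0 : ℝ) ≤ 2 ^ k),
      mul_le_mul_of_nonneg_right h₄ J.len_pos.le]
  calc a * ∑ Q ∈ B, ENNReal.ofReal Q.I.len
      ≤ ∑ Q ∈ B, ∫⁻ y in (fun y => (y, N y)) ⁻¹' Q.enlarged k, (‖f y‖₊ : ℝ≥0∞) := by
        rw [Finset.mul_sum]
        exact Finset.sum_le_sum hdense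
    _ = ∫⁻ y in ⋃ Q ∈ B, (fun y => (y, N y)) ⁻¹' Q.enlarged k, (‖f y‖₊ : ℝ≥0∞) :=
        (lintegral_biUnion_finset (fun P hP Q hQ hne => (hdisj hP hQ hne).preimage _)
          (fun Q _ => hgraph (Q.measurableSet_enlarged k)) _).symm
    _ ≤ ∫⁻ y in ball x (2 ^ (k + 1) * J.len), (‖f y‖₊ : ℝ≥0∞) :=
        lintegral_mono_set (Set.iUnion₂_subset hball)
    _ ≤ ENNReal.ofReal (2 ^ (k + 2) * J.len) * hlMax f x := by
        rw [pow_succ' 2 (k + 1), mul_assoc]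
        exact le_hlMax f x (by have := J.len_pos; positivity)

lemma mul_sum_len_le_of_dense {k : ℕ} {J : DyadicInterval} {N : ℝ → ℝ} (hN : Measurable N)
    {f : ℝ → ℂ} {a : ℝ≥0∞} {𝒞 : Finset Tile}
    (hvalid : ∀ P ∈ 𝒞, P.Valid) (hsub : ∀ P ∈ 𝒞, P.I.set ⊆ J.set)
    (hincomp : ∀ P ∈ 𝒞, ∀ P' ∈ 𝒞, P ≠ P' → ¬TileLe P P' ∧ ¬TileLe P' P)
    (hdense : ∀ P ∈ 𝒞, a * ENNReal.ofReal P.I.len ≤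
      ∫⁻ y in (fun y => (y, N y)) ⁻¹' P.enlarged k, (‖f y‖₊ : ℝ≥0∞))
    {x : ℝ} (hx : x ∈ J.set) :
    a * ∑ P ∈ 𝒞, ENNReal.ofReal P.I.len ≤
      2 ^ (k + 3) * (ENNReal.ofReal (2 ^ (k + 2) * J.len) * hlMax f x) := by
  classical
  obtain ⟨u, hu𝒞, hudisj, hcover⟩ := Vitali.exists_disjoint_subfamily_covering_enlargement
    (Tile.enlarged k) (𝒞 : Set Tile) (fun P => P.I.len) (3 / 2) (by norm_num)
    (fun P _ => P.I.len_pos.le) J.len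
    (fun P hP => DyadicInterval.len_le_len_of_subset (hsub P hP))
    (fun P _ => P.enlarged_nonempty k)
  have hufin : u.Finite := 𝒞.finite_toSet.subset hu𝒞
  set B := hufin.toFinset
  have hB𝒞 : ∀ Q ∈ B, Q ∈ 𝒞 := fun Q hQ => hu𝒞 (hufin.mem_toFinset.1 hQ)
  choose! σ hσB hσmeet hσlen using hcover
  have hσ : ∀ P ∈ 𝒞, σ P ∈ B := fun P hP => hufin.mem_toFinset.2 (hσB P hP)
  -- Dyadic lengths: `|I_P| ≤ (3/2) |I_Q|` already forces `|I_P| ≤ |I_Q|`.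
  have hσle : ∀ P ∈ 𝒞, P.I.len ≤ (σ P).I.len := fun P hP =>
    DyadicInterval.len_le_len_of_lt_two_mul
      ((hσlen P hP).trans_lt (by have := (σ P).I.len_pos; linarith))
  calc a * ∑ P ∈ 𝒞, ENNReal.ofReal P.I.len
      = a * ∑ Q ∈ B, ∑ P ∈ 𝒞 with σ P = Q, ENNReal.ofReal P.I.len := by
        rw [Finset.sum_fiberwise_of_maps_to hσ]
    _ ≤ a * ∑ Q ∈ B, 2 ^ (k + 3) * ENNReal.ofReal Q.I.len := by
        gcongr with Q hQ
        refine Tile.sum_len_le_of_meet_enlarged (hvalid Q (hB𝒞 Q hQ))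
          (fun P hP => hvalid P (Finset.mem_filter.1 hP).1)
          (fun P hP P' hP' =>
            hincomp P (Finset.mem_filter.1 hP).1 P' (Finset.mem_filter.1 hP').1)
          (fun P hP => ?_) (fun P hP => ?_)
        · obtain ⟨hP𝒞, rfl⟩ := Finset.mem_filter.1 hP
          exact hσmeet P hP𝒞
        · obtain ⟨hP𝒞, rfl⟩ := Finset.mem_filter.1 hP
          exact hσle P hP𝒞
    _ = 2 ^ (k + 3) * (a * ∑ Q ∈ B, ENNReal.ofReal Q.I.len) := by
        rw [← Finset.mul_sum, mul_left_comm]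
    _ ≤ 2 ^ (k + 3) * (ENNReal.ofReal (2 ^ (k + 2) * J.len) * hlMax f x) := by
        exact mul_le_mul_right (mul_sum_len_le_of_pairwiseDisjoint_enlarged hN
          (fun Q hQ => hsub Q (hB𝒞 Q hQ)) (hudisj.subset (by simp [B]))
          (fun Q hQ => hdense Q (hB𝒞 Q hQ)) hx) _

lemma one_le_jbracket (x : ℝ) : 1 ≤ jbracket x :=
  Real.one_le_sqrt.2 (by nlinarith [sq_nonneg x])

lemma abs_le_jbracket (x : ℝ) : |x| ≤ jbracket x := Real.abs_le_sqrt (by linarith)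

namespace DyadicInterval

lemma cutoff_nonneg (I : DyadicInterval) (x : ℝ) : 0 ≤ cutoff I x :=
  inv_nonneg.2 (zero_le_one.trans (one_le_jbracket _))

lemma cutoff_le_one (I : DyadicInterval) (x : ℝ) : cutoff I x ≤ 1 :=
  inv_le_one_of_one_le₀ (one_le_jbracket _)

lemma cutoff_le_of_lt_dist {I : DyadicInterval} {x : ℝ} {j : ℕ}
    (h : 2 ^ j * I.len < dist x I.center) : cutoff I x ≤ (2 ^ j)⁻¹ := by
  refine inv_anti₀ (by positivity) ((le_of_lt ?_).trans (abs_le_jbracket _))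
  rwa [abs_div, abs_of_pos I.len_pos, lt_div_iff₀ I.len_pos, ← Real.dist_eq]

lemma exists_mem_closedBall_cutoff_le (I : DyadicInterval) (x : ℝ) :
    ∃ n : ℕ, x ∈ closedBall I.center (2 ^ n * I.len) ∧ cutoff I x ≤ 2 / 2 ^ n := by
  classical
  have hex : ∃ n : ℕ, x ∈ closedBall I.center (2 ^ n * I.len) := by
    obtain ⟨n, hn⟩ :=
      pow_unbounded_of_one_lt (dist x I.center / I.len) (one_lt_two : (1 : ℝ) < 2)
    exact ⟨n, ((div_lt_iff₀ I.len_pos).1 hn).le⟩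
  refine ⟨Nat.find hex, Nat.find_spec hex, ?_⟩
  cases hn : Nat.find hex with
  | zero => exact (I.cutoff_le_one x).trans (by norm_num)
  | succ j =>
    have hj : x ∉ closedBall I.center (2 ^ j * I.len) := Nat.find_min hex (by omega)
    rw [mem_closedBall, not_le] at hj
    rw [pow_succ, div_mul_cancel_right₀ two_ne_zero]
    exact cutoff_le_of_lt_dist hj

/-- Only the exponent `7 > 6` matters: the weights `(2/2ⁿ)^7` must beat the thresholds `2^{6n}`. -/
lemma ofReal_cutoff_pow_le_tsum (I : DyadicInterval) (x : ℝ) :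
    ENNReal.ofReal (cutoff I x ^ (2 ^ 9 : ℕ)) ≤
      ∑' n : ℕ, ENNReal.ofReal ((2 / 2 ^ n) ^ 7) *
        (closedBall I.center (2 ^ n * I.len)).indicator 1 x := by
  obtain ⟨n, hmem, hle⟩ := I.exists_mem_closedBall_cutoff_le x
  refine le_trans ?_ (ENNReal.le_tsum n)
  rw [Set.indicator_of_mem hmem, Pi.one_apply, mul_one]
  refine ENNReal.ofReal_le_ofReal ?_
  calc cutoff I x ^ (2 ^ 9 : ℕ) ≤ cutoff I x ^ 7 :=
        pow_le_pow_of_le_one (I.cutoff_nonneg x) (I.cutoff_le_one x) (by norm_num)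
    _ ≤ (2 / 2 ^ n) ^ 7 := pow_le_pow_left₀ (I.cutoff_nonneg x) hle 7

lemma lintegral_mul_cutoff_pow_le (I : DyadicInterval) {g : ℝ → ℝ≥0∞} (hg : Measurable g) :
    ∫⁻ x, g x * ENNReal.ofReal (cutoff I x ^ (2 ^ 9 : ℕ)) ≤
      ∑' n : ℕ, ENNReal.ofReal ((2 / 2 ^ n) ^ 7) *
        ∫⁻ x in closedBall I.center (2 ^ n * I.len), g x := by
  calc ∫⁻ x, g x * ENNReal.ofReal (cutoff I x ^ (2 ^ 9 : ℕ))
      ≤ ∫⁻ x, ∑' n : ℕ, ENNReal.ofReal ((2 / 2 ^ n) ^ 7) *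
          (closedBall I.center (2 ^ n * I.len)).indicator g x := by
        refine lintegral_mono fun x => (mul_le_mul_right (I.ofReal_cutoff_pow_le_tsum x) _).trans ?_
        simp only [← ENNReal.tsum_mul_left, ← Set.indicator_mul_right, mul_left_comm (g x),
          Pi.one_apply, mul_one, le_refl]
    _ = _ := by
        rw [lintegral_tsum fun n =>
          ((hg.indicator measurableSet_closedBall).const_mul _).aemeasurable]
        simp only [lintegral_const_mul' _ _ ENNReal.ofReal_ne_top,
          lintegral_indicator measurableSet_closedBall]

end DyadicInterval

lemma exists_scale_le_lintegral_of_lt_tailedAvg {f : ℝ → ℂ} (hf : Measurable f) {S : Set ℝ}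
    (hS : MeasurableSet S) (I : DyadicInterval) {δ : ℝ} (hδ : 0 ≤ δ)
    (h : ENNReal.ofReal δ < tailedAvg f S I) :
    ∃ k : ℕ, ENNReal.ofReal (2 ^ (6 * k) * δ / 2 ^ 8) * ENNReal.ofReal I.len ≤
      ∫⁻ x in closedBall I.center (2 ^ k * I.len) ∩ S, (‖f x‖₊ : ℝ≥0∞) := by
  by_contra! hsmall
  have hℓ := I.len_pos
  have hg : Measurable (S.indicator fun y => (‖f y‖₊ : ℝ≥0∞)) :=
    hf.nnnorm.coe_nnreal_ennreal.indicator hS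
  have hsum : Summable fun n : ℕ => δ * I.len / 2 * (1 / 2) ^ n :=
    summable_geometric_two.mul_left _
  have htail : ∫⁻ x, S.indicator (fun y => (‖f y‖₊ : ℝ≥0∞)) x *
      ENNReal.ofReal (cutoff I x ^ (2 ^ 9 : ℕ)) ≤ ENNReal.ofReal δ * ENNReal.ofReal I.len :=
    calc _ ≤ ∑' n : ℕ, ENNReal.ofReal ((2 / 2 ^ n) ^ 7) *
            ∫⁻ x in closedBall I.center (2 ^ n * I.len), S.indicator (fun y => (‖f y‖₊ : ℝ≥0∞)) x :=
          I.lintegral_mul_cutoff_pow_le hg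
      _ ≤ ∑' n : ℕ, ENNReal.ofReal ((2 / 2 ^ n) ^ 7) *
            (ENNReal.ofReal (2 ^ (6 * n) * δ / 2 ^ 8) * ENNReal.ofReal I.len) := by
          refine ENNReal.tsum_le_tsum fun n => mul_le_mul_right ?_ _
          rw [setLIntegral_indicator hS, Set.inter_comm]
          exact (hsmall n).le
      _ = ∑' n : ℕ, ENNReal.ofReal (δ * I.len / 2 * (1 / 2) ^ n) := by
          refine tsum_congr fun n => ?_
          rw [← ENNReal.ofReal_mul (by positivity), ← ENNReal.ofReal_mul (by positivity)]
          congr 1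
          rw [one_div_pow]
          field_simp
          ring
      _ = ENNReal.ofReal δ * ENNReal.ofReal I.len := by
          rw [← ENNReal.ofReal_tsum_of_nonneg (fun n => by positivity) hsum, tsum_mul_left,
            tsum_geometric_two, div_mul_cancel₀ _ two_ne_zero, ENNReal.ofReal_mul hδ]
  refine h.not_ge ?_
  rw [tailedAvg, ENNReal.inv_mul_le_iff (by simpa using hℓ) ENNReal.ofReal_ne_top, mul_comm]
  exact htail

lemma sum_len_le_of_dense_at_scale (k : ℕ) {J : DyadicInterval} {N : ℝ → ℝ} (hN : Measurable N)
    {f : ℝ → ℂ} {δ : ℝ} (hδ : 0 < δ) {𝒞 : Finset Tile}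
    (hvalid : ∀ P ∈ 𝒞, P.Valid) (hsub : ∀ P ∈ 𝒞, P.I.set ⊆ J.set)
    (hincomp : ∀ P ∈ 𝒞, ∀ P' ∈ 𝒞, P ≠ P' → ¬TileLe P P' ∧ ¬TileLe P' P)
    (hdense : ∀ P ∈ 𝒞, ENNReal.ofReal (2 ^ (6 * k) * δ / 2 ^ 8) * ENNReal.ofReal P.I.len ≤
      ∫⁻ y in closedBall P.I.center (2 ^ k * P.I.len) ∩ N ⁻¹' (P.ω.parent 1).set,
        (‖f y‖₊ : ℝ≥0∞))
    {x : ℝ} (hx : x ∈ J.set) :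
    ∑ P ∈ 𝒞, ENNReal.ofReal P.I.len ≤
      ENNReal.ofReal (2 ^ 13 / δ * J.len * (1 / 16) ^ k) * hlMax f x := by
  have hJ := J.len_pos
  have h := mul_sum_len_le_of_dense hN hvalid hsub hincomp hdense hx
  rw [ENNReal.mul_le_iff_le_inv (by simp; positivity) ENNReal.ofReal_ne_top] at h
  refine h.trans_eq ?_
  rw [← ENNReal.ofReal_inv_of_pos (by positivity), ← mul_assoc, ← mul_assoc,
    ← ENNReal.ofReal_ofNat, ← ENNReal.ofReal_pow zero_le_two,
    ← ENNReal.ofReal_mul (by positivity), ← ENNReal.ofReal_mul (by positivity)]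
  congr 2
  rw [one_div_pow, show (16 : ℝ) ^ k = (2 ^ k) ^ 4 by rw [← pow_mul, mul_comm, pow_mul]; norm_num]
  field_simp
  ring

lemma sum_le_tsum_of_fiberwise_le {α : Type*} (s : Finset α) (κ : α → ℕ) (F : α → ℝ≥0∞)
    (b : ℕ → ℝ≥0∞) (h : ∀ k, ∑ a ∈ s with κ a = k, F a ≤ b k) : ∑ a ∈ s, F a ≤ ∑' k, b k := by
  rw [← Finset.sum_fiberwise_of_maps_to fun a ha => Finset.mem_image_of_mem κ ha]
  exact (Finset.sum_le_sum fun k _ => h k).trans (ENNReal.sum_le_tsum _)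

/-- tile-counting estimate for incomparable dense tiles: if `ℙ' ⊂ 𝕊^J`
is a finite collection of pairwise incomparable tiles such that
`⟪f·1_{N⁻¹(ω_P^{p(1)})}⟫_{1,I_P} > δ` for all `P ∈ ℙ'`, then
`Σ_{P ∈ ℙ'} |I_P| ≤ C δ⁻¹ |J| inf_J M f`. -/
theorem stmt13 :
    ∃ C : ℝ, 0 < C ∧
      ∀ (J : DyadicInterval) (N : ℝ → ℝ), Measurable N →
      ∀ f : ℝ → ℂ, Measurable f → (∃ B, ∀ x, ‖f x‖ ≤ B) → (∃ R, ∀ x, R < |x| → f x = 0) →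
      ∀ δ : ℝ, 0 < δ →
      ∀ ℙ' : Finset Tile,
        (∀ P ∈ ℙ', P.Valid) →
        (∀ P ∈ ℙ', P.I.set ⊆ J.set) →
        (∀ P ∈ ℙ', ∀ P' ∈ ℙ', P ≠ P' → ¬TileLe P P' ∧ ¬TileLe P' P) →
        (∀ P ∈ ℙ', ENNReal.ofReal δ <
          tailedAvg f (N ⁻¹' (P.ω.parent 1).set) P.I) →
        ∑ P ∈ ℙ', ENNReal.ofReal P.I.len ≤
          ENNReal.ofReal (C / δ * J.len) * ⨅ x ∈ J.set, hlMax f x := by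
  refine ⟨2 ^ 14, by positivity, fun J N hN f hf _ _ δ hδ ℙ' hvalid hsub hincomp hdense => ?_⟩
  have hscale : ∀ P ∈ ℙ', ∃ k : ℕ, ENNReal.ofReal (2 ^ (6 * k) * δ / 2 ^ 8) *
      ENNReal.ofReal P.I.len ≤ ∫⁻ y in closedBall P.I.center (2 ^ k * P.I.len) ∩
        N ⁻¹' (P.ω.parent 1).set, (‖f y‖₊ : ℝ≥0∞) := fun P hP =>
    exists_scale_le_lintegral_of_lt_tailedAvg hf (hN (P.ω.parent 1).measurableSet_set) P.I hδ.le
      (hdense P hP)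
  choose! κ hκ using hscale
  have hJ := J.len_pos
  have hc : ENNReal.ofReal (2 ^ 14 / δ * J.len) ≠ 0 := by simp; positivity
  simp_rw [ENNReal.mul_iInf_of_ne hc ENNReal.ofReal_ne_top]
  refine le_iInf₂ fun x hx => ?_
  have hgeom : Summable fun k : ℕ => 2 ^ 13 / δ * J.len * (1 / 16 : ℝ) ^ k :=
    (summable_geometric_of_lt_one (by norm_num) (by norm_num)).mul_left _
  calc ∑ P ∈ ℙ', ENNReal.ofReal P.I.len
      ≤ ∑' k : ℕ, ENNReal.ofReal (2 ^ 13 / δ * J.len * (1 / 16) ^ k) * hlMax f x := by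
        refine sum_le_tsum_of_fiberwise_le _ κ _ _ fun k => ?_
        have hℙ' : ∀ P ∈ ℙ'.filter (κ · = k), P ∈ ℙ' := fun P hP => (Finset.mem_filter.1 hP).1
        refine sum_len_le_of_dense_at_scale k hN hδ (fun P hP => hvalid P (hℙ' P hP))
          (fun P hP => hsub P (hℙ' P hP))
          (fun P hP P' hP' => hincomp P (hℙ' P hP) P' (hℙ' P' hP')) (fun P hP => ?_) hx
        obtain ⟨hPℙ, rfl⟩ := Finset.mem_filter.1 hP
        exact hκ P hPℙ
    _ ≤ ENNReal.ofReal (2 ^ 14 / δ * J.len) * hlMax f x := by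
        rw [ENNReal.tsum_mul_right, ← ENNReal.ofReal_tsum_of_nonneg (fun k => by positivity) hgeom,
          tsum_mul_left, tsum_geometric_of_lt_one (by norm_num) (by norm_num),
          show (2 : ℝ) ^ 14 / δ * J.len = 2 ^ 13 / δ * J.len * 2 by ring]
        gcongr
        norm_num
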